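/- Suppose A(r) and V(r) are functions with A(r) = 2πr^2(1 + Θ(r) + O(r^{-2τ})) where Θ(r) = O(r^{-τ}), τ > 1/2, and V(r) = (1/2) r A(r) - (1/3)πr^3 + πm r^2 + o(r^2). Then (2/A(r))·(V(r) - √2 A(r)^{3/2}/(6√π)) → m as r → ∞. -/

import Mathlib

/-!
Put `q = A / (2πr²)`, so that `q = 1 + O(r^{-τ})`. Substituting `A = 2πr²q` and the expansion of
`V`, the isoperimetric mass becomes `r (1 - 1/(3q) - (2/3)√q) + m/q + o(1)`. The terms linear in
`q - 1` cancel in `1 - 1/(3q) - (2/3)√q`, which is therefore `O((q - 1)²) = O(r^{-2τ})`, and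
`r · r^{-2τ} → 0` because `τ > 1/2`.
-/

open Filter Asymptotics Topology Real

lemma abs_one_sub_inv_sub_sqrt_le {q : ℝ} (hq : 1 / 2 ≤ q) :
    |1 - 1 / (3 * q) - 2 / 3 * √q| ≤ (q - 1) ^ 2 := by
  set s := √q
  have hs2 : s ^ 2 = q := sq_sqrt (by linarith)
  have hs0 : 0 < s := sqrt_pos.2 (by linarith)
  rw [← hs2] at hq ⊢
  have hs7 : 7 / 10 ≤ s := by nlinarith
  have key : 1 - 1 / (3 * s ^ 2) - 2 / 3 * s = -((s - 1) ^ 2 * (2 * s + 1)) / (3 * s ^ 2) := by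
    field_simp; ring
  rw [key, abs_div, abs_neg, abs_of_nonneg (by positivity), abs_of_nonneg (by positivity),
    div_le_iff₀ (by positivity), show (s ^ 2 - 1) ^ 2 = (s - 1) ^ 2 * (s + 1) ^ 2 by ring,
    mul_assoc]
  exact mul_le_mul_of_nonneg_left (by nlinarith) (sq_nonneg _)

lemma tendsto_mul_sq_of_isBigO_rpow {f : ℝ → ℝ} {τ : ℝ} (hτ : 1 / 2 < τ)
    (hf : f =O[atTop] fun r => r ^ (-τ)) :
    Tendsto (fun r => r * f r ^ 2) atTop (𝓝 0) := by
  have hid : (fun r : ℝ => r) =O[atTop] fun r => r ^ (1 : ℝ) := by simp [isBigO_refl]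
  have hO : (fun r => r * f r ^ 2) =O[atTop] fun r => r ^ (-(2 * τ - 1)) := by
    refine (hid.mul_atTop_rpow_of_isBigO_rpow _ _ _
      (hf.mul_atTop_rpow_of_isBigO_rpow _ _ _ hf le_rfl) (by linarith)).congr_left fun r => ?_
    simp only [Pi.mul_apply, sq]
  exact hO.trans_tendsto (tendsto_rpow_neg_atTop (by linarith))

lemma tendsto_of_isBigO_rpow_neg {f : ℝ → ℝ} {τ c : ℝ} (hτ : 0 < τ)
    (hf : (fun r => f r - c) =O[atTop] fun r => r ^ (-τ)) :
    Tendsto f atTop (𝓝 c) := by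
  simpa using (hf.trans_tendsto (tendsto_rpow_neg_atTop hτ)).add_const c

lemma tendsto_mul_one_sub_inv_sub_sqrt {q : ℝ → ℝ} {τ : ℝ} (hτ : 1 / 2 < τ)
    (hq : (fun r => q r - 1) =O[atTop] fun r => r ^ (-τ)) :
    Tendsto (fun r => r * (1 - 1 / (3 * q r) - 2 / 3 * √(q r))) atTop (𝓝 0) := by
  have hhalf : ∀ᶠ r in atTop, 1 / 2 ≤ q r :=
    (tendsto_of_isBigO_rpow_neg (by linarith) hq).eventually (eventually_ge_nhds (by norm_num))
  refine squeeze_zero_norm' ?_ (tendsto_mul_sq_of_isBigO_rpow hτ hq)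
  filter_upwards [eventually_ge_atTop 0, hhalf] with r hr hqr
  rw [norm_mul, norm_of_nonneg hr]
  exact mul_le_mul_of_nonneg_left (abs_one_sub_inv_sub_sqrt_le hqr) hr

noncomputable def areaRatio (a r : ℝ) : ℝ := a / (2 * π * r ^ 2)

noncomputable def isoperimetricMass (a v : ℝ) : ℝ :=
  2 / a * (v - √2 * a ^ (3 / 2 : ℝ) / (6 * √π))

lemma isBigO_inv_const_mul_sq_rpow (c : ℝ) :
    (fun r : ℝ => (c * r ^ 2)⁻¹) =O[atTop] fun r => r ^ (-2 : ℝ) := by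
  refine ((isBigO_refl (fun r : ℝ => r ^ (-2 : ℝ)) atTop).const_mul_left c⁻¹).congr' ?_ .rfl
  filter_upwards [eventually_gt_atTop 0] with r hr
  rw [rpow_neg hr.le, rpow_two, mul_inv]

lemma isBigO_areaRatio_sub_one {A Θ : ℝ → ℝ} {τ : ℝ} (hτ : 0 ≤ τ)
    (hΘ : Θ =O[atTop] fun r => r ^ (-τ))
    (hA : (fun r => A r - 2 * π * r ^ 2 * (1 + Θ r)) =O[atTop] fun r => r ^ ((2 : ℝ) - 2 * τ)) :
    (fun r => areaRatio (A r) r - 1) =O[atTop] fun r => r ^ (-τ) := by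
  have hcorr := hA.mul_atTop_rpow_of_isBigO_rpow _ _ (-τ) (isBigO_inv_const_mul_sq_rpow (2 * π))
    (by linarith)
  refine (hΘ.add hcorr).congr' ?_ .rfl
  filter_upwards [eventually_ne_atTop 0] with r hr
  simp only [Pi.mul_apply, areaRatio]
  field_simp
  ring

lemma sqrt_two_mul_rpow_three_halves_div {a r : ℝ} (ha : 0 ≤ a) (hr : 0 < r) :
    √2 * a ^ (3 / 2 : ℝ) / (6 * √π) = r * a * √(areaRatio a r) / 3 := by
  have h32 : a ^ (3 / 2 : ℝ) = a * √a := by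
    rw [show (3 / 2 : ℝ) = 1 + 1 / 2 by norm_num, rpow_add' ha (by norm_num), rpow_one,
      sqrt_eq_rpow]
  have hq : √(areaRatio a r) = √a / (√2 * √π * r) := by
    rw [areaRatio, sqrt_div ha, sqrt_mul (by positivity), sqrt_mul (by positivity),
      sqrt_sq hr.le]
  have : √π ≠ 0 := (sqrt_pos.2 pi_pos).ne'
  rw [h32, hq]
  field_simp
  rw [sq_sqrt zero_le_two]
  ring

lemma isoperimetricMass_eq {a v r m : ℝ} (ha : 0 < a) (hr : 0 < r) :
    isoperimetricMass a v = r * (1 - 1 / (3 * areaRatio a r) - 2 / 3 * √(areaRatio a r))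
      + m / areaRatio a r
      + (v - (1 / 2 * r * a - 1 / 3 * π * r ^ 3 + π * m * r ^ 2)) / r ^ 2
        / (π * areaRatio a r) := by
  rw [isoperimetricMass, sqrt_two_mul_rpow_three_halves_div ha.le hr]
  have : 0 < π := pi_pos
  simp only [areaRatio]
  field_simp
  ring

/-- if `A(r) = 2πr²(1 + Θ(r) + O(r^{-2τ}))` with `Θ(r) = O(r^{-τ})`,
`τ > 1/2`, and `V(r) = (1/2) r A(r) - (1/3)πr³ + πm r² + o(r²)`, then the isoperimetric
mass expression `(2/A(r))(V(r) - √2 A(r)^{3/2}/(6√π))` tends to `m` as `r → ∞`. -/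
theorem isoperimetric_mass_limit
    (A V Θ : ℝ → ℝ) (m τ : ℝ) (hτ : τ > 1 / 2)
    (hΘ : Θ =O[atTop] fun r => r ^ (-τ))
    (hA : (fun r => A r - 2 * Real.pi * r ^ 2 * (1 + Θ r))
      =O[atTop] fun r => r ^ ((2 : ℝ) - 2 * τ))
    (hV : (fun r => V r - ((1 / 2) * r * A r - (1 / 3) * Real.pi * r ^ 3
        + Real.pi * m * r ^ 2))
      =o[atTop] fun r => r ^ 2) :
    Tendsto (fun r => (2 / A r) *
        (V r - Real.sqrt 2 * (A r) ^ ((3 : ℝ) / 2) / (6 * Real.sqrt Real.pi)))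
      atTop (nhds m) := by
  show Tendsto (fun r => isoperimetricMass (A r) (V r)) atTop (𝓝 m)
  have hq := isBigO_areaRatio_sub_one (by linarith) hΘ hA
  have hq1 : Tendsto (fun r => areaRatio (A r) r) atTop (𝓝 1) :=
    tendsto_of_isBigO_rpow_neg (by linarith) hq
  have hdefect := tendsto_mul_one_sub_inv_sub_sqrt hτ hq
  have hmass : Tendsto (fun r => m / areaRatio (A r) r) atTop (𝓝 m) := by
    simpa using! tendsto_const_nhds.div hq1 one_ne_zero
  have hvol := hV.tendsto_div_nhds_zero.div (tendsto_const_nhds (x := π).mul hq1) (by positivity)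
  have hsum := (hdefect.add hmass).add hvol
  simp only [zero_add, zero_div, add_zero] at hsum
  refine hsum.congr' ?_
  filter_upwards [eventually_gt_atTop 0,
    hq1.eventually (eventually_gt_nhds one_pos)] with r hr hqr
  have hApos : 0 < A r := (div_pos_iff_of_pos_right (by positivity)).1 hqr
  exact (isoperimetricMass_eq hApos hr).symm
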